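/- arXiv:1710.08497 — 5 statements merged into one kernel-verified Lean document; each statement's English description precedes it below -/
import Mathlib

section
/- For any c > 0, the function f(t) = (1 + c - (c^t + c^{1-t})) / (t(1-t)) is decreasing on (0, 1/2) and increasing on (1/2, 1). -/
/-!
Write `L = log c` and `u = t - 1/2`. Then `c ^ t + c ^ (1 - t) = 2 √c cosh (u L)`,
`1 + c = 2 √c cosh (L / 2)` and `t (1 - t) = 1/4 - u²`, so `f t` is `2 √c` times the slope of the
secant of `h v = cosh (L √v)` between `v = u²` and `v = 1/4`. The function `h` is convex on
`[0, ∞)`, because the derivative `sinh √A / (2 √A)` of `cosh √A` increases, so that slope increases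
with `u² = (t - 1/2)²`.
-/

open Real Set

namespace Real

lemma convexOn_sinh_Ici : ConvexOn ℝ (Ici 0) sinh := by
  refine MonotoneOn.convexOn_of_deriv (convex_Ici 0) continuous_sinh.continuousOn
    differentiable_sinh.differentiableOn ?_
  rw [deriv_sinh, interior_Ici]
  intro x hx y hy hxy
  exact cosh_le_cosh.2 (by rwa [abs_of_pos hx, abs_of_pos hy])

lemma monotoneOn_sinh_div_self : MonotoneOn (fun y => sinh y / y) (Ioi 0) := by
  intro x (hx : 0 < x) y (hy : 0 < y) hxy
  simpa using convexOn_sinh_Ici.secant_mono (a := 0) self_mem_Ici (mem_Ici.2 hx.le)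
    (mem_Ici.2 hy.le) hx.ne' hy.ne' hxy

lemma hasDerivAt_cosh_sqrt {x : ℝ} (hx : 0 < x) :
    HasDerivAt (fun A => cosh √A) (sinh √x / √x / 2) x := by
  have h : HasDerivAt (fun A => cosh √A) (sinh √x * (1 / (2 * √x))) x :=
    (hasDerivAt_cosh √x).comp x (hasDerivAt_sqrt hx.ne')
  exact h.congr_deriv (by ring)

lemma convexOn_cosh_sqrt : ConvexOn ℝ (Ici 0) fun A => cosh √A := by
  refine MonotoneOn.convexOn_of_deriv (convex_Ici 0)
    (continuous_cosh.comp continuous_sqrt).continuousOn ?_ ?_ <;> rw [interior_Ici]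
  · exact fun A hA => (hasDerivAt_cosh_sqrt hA).differentiableAt.differentiableWithinAt
  · intro A (hA : 0 < A) B (hB : 0 < B) hAB
    rw [(hasDerivAt_cosh_sqrt hA).deriv, (hasDerivAt_cosh_sqrt hB).deriv]
    gcongr ?_ / 2
    exact monotoneOn_sinh_div_self (sqrt_pos.2 hA) (sqrt_pos.2 hB) (sqrt_le_sqrt hAB)

lemma convexOn_cosh_mul_sqrt (a : ℝ) : ConvexOn ℝ (Ici 0) fun v => cosh (a * √v) := by
  have h := (convexOn_cosh_sqrt.comp_linearMap ((a ^ 2) • LinearMap.id)).subset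
    (fun v (hv : 0 ≤ v) => by simpa using mul_nonneg (sq_nonneg a) hv) (convex_Ici 0)
  refine h.congr fun v _ => ?_
  simp [sqrt_mul (sq_nonneg a), sqrt_sq_eq_abs, ← cosh_abs (a * √v), abs_mul,
    abs_of_nonneg (sqrt_nonneg v)]

end Real

lemma one_add_sub_rpow_add_rpow_one_sub {c : ℝ} (hc : 0 < c) (t : ℝ) :
    1 + c - (c ^ t + c ^ (1 - t)) =
      2 * √c * (cosh (log c / 2) - cosh ((t - 1 / 2) * log c)) := by
  have hsqrt : √c = exp (log c / 2) := by rw [exp_half, exp_log hc]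
  have hc' : c = exp (log c / 2) * exp (log c / 2) := by rw [← exp_add, add_halves, exp_log hc]
  have hpow : ∀ s, c ^ s = exp (log c / 2) * exp ((s - 1 / 2) * log c) := fun s => by
    rw [rpow_def_of_pos hc, ← exp_add]; ring_nf
  rw [hpow, hpow, hsqrt, cosh_eq, cosh_eq,
    show (1 - t - 1 / 2) * log c = -((t - 1 / 2) * log c) by ring]
  simp only [exp_neg]
  nth_rewrite 1 [hc']
  field_simp
  ring

lemma heinz_eq_secant {c : ℝ} (hc : 0 < c) (t : ℝ) :
    (1 + c - (c ^ t + c ^ (1 - t))) / (t * (1 - t)) =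
      2 * √c * ((cosh (log c * √((t - 1 / 2) ^ 2)) - cosh (log c * √(1 / 4))) /
        ((t - 1 / 2) ^ 2 - 1 / 4)) := by
  have hcosh : cosh (log c * √((t - 1 / 2) ^ 2)) = cosh ((t - 1 / 2) * log c) := by
    rw [sqrt_sq_eq_abs, ← cosh_abs, abs_mul, abs_abs, ← abs_mul, cosh_abs, mul_comm]
  have hquarter : √(1 / 4 : ℝ) = 1 / 2 := by
    rw [show (1 / 4 : ℝ) = (1 / 2) ^ 2 by norm_num, sqrt_sq (by norm_num)]
  rw [one_add_sub_rpow_add_rpow_one_sub hc, hcosh, hquarter, mul_one_div,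
    show (t - 1 / 2) ^ 2 - 1 / 4 = -(t * (1 - t)) by ring, div_neg, ← neg_div, neg_sub,
    mul_div_assoc]

lemma heinz_le_of_sq_sub_half_le {c s t : ℝ} (hc : 0 < c) (hs : s ∈ Ioo 0 1)
    (hts : (t - 1 / 2) ^ 2 ≤ (s - 1 / 2) ^ 2) :
    (1 + c - (c ^ t + c ^ (1 - t))) / (t * (1 - t)) ≤
      (1 + c - (c ^ s + c ^ (1 - s))) / (s * (1 - s)) := by
  have hs' : (s - 1 / 2) ^ 2 < 1 / 4 := by nlinarith [hs.1, hs.2]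
  have ht' : (t - 1 / 2) ^ 2 < 1 / 4 := hts.trans_lt hs'
  rw [heinz_eq_secant hc, heinz_eq_secant hc]
  gcongr 2 * √c * ?_
  exact (convexOn_cosh_mul_sqrt (log c)).secant_mono (by norm_num) (mem_Ici.2 (sq_nonneg _))
    (mem_Ici.2 (sq_nonneg _)) ht'.ne hs'.ne hts

theorem heinz_f_monotone (c : ℝ) (hc : 0 < c) :
    AntitoneOn (fun t : ℝ => (1 + c - (c ^ t + c ^ (1 - t))) / (t * (1 - t)))
      (Set.Ioo (0:ℝ) (1/2)) ∧
    MonotoneOn (fun t : ℝ => (1 + c - (c ^ t + c ^ (1 - t))) / (t * (1 - t)))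
      (Set.Ioo ((1:ℝ)/2) 1) := by
  have hleft : Ioo (0 : ℝ) (1 / 2) ⊆ Ioo 0 1 := Ioo_subset_Ioo_right (by norm_num)
  have hright : Ioo (1 / 2 : ℝ) 1 ⊆ Ioo 0 1 := Ioo_subset_Ioo_left (by norm_num)
  constructor
  · intro s hs t ht hst
    exact heinz_le_of_sq_sub_half_le hc (hleft hs) (by nlinarith [hs.2, ht.2])
  · intro s hs t ht hst
    exact heinz_le_of_sq_sub_half_le hc (hright ht) (by nlinarith [hs.1, ht.1])
end

section
/- For all a, b > 0 and 0 ≤ t ≤ 1, the Heinz mean satisfies H_t(a,b) ≤ K_{α(t)}(a,b), where α(t) = 1 - 4t(1-t). -/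
/-!
With `d = (log a - log b) / 2` and `l = 2t - 1`, the Heinz mean equals `√(ab) cosh (l d)`, the
arithmetic mean equals `√(ab) cosh d`, and `α(t) = l²`. The inequality therefore reduces to
`cosh (l x) ≤ 1 - l² + l² cosh x` for `|l| ≤ 1`, which holds term by term in the power series of
`cosh`, since `(l²)ⁿ ≤ l²` for `n ≥ 1`.
-/

open Real

theorem Real.cosh_mul_le {l : ℝ} (hl : |l| ≤ 1) (x : ℝ) :
    cosh (l * x) ≤ 1 - l ^ 2 + l ^ 2 * cosh x := by
  have hl2 : l ^ 2 ≤ 1 := by rwa [sq_le_one_iff_abs_le_one]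
  have hsum := ((hasSum_cosh 0).mul_left (1 - l ^ 2)).add ((hasSum_cosh x).mul_left (l ^ 2))
  rw [cosh_zero, mul_one] at hsum
  refine hasSum_le (fun n => ?_) (hasSum_cosh (l * x)) hsum
  rw [mul_pow, pow_mul, mul_div_assoc]
  rcases n with _ | n
  · simp
  · have hpow : (l ^ 2) ^ (n + 1) ≤ l ^ 2 := pow_le_of_le_one (sq_nonneg l) hl2 n.succ_ne_zero
    have hzero : (0 : ℝ) ^ (2 * (n + 1)) = 0 := zero_pow (by omega)
    rw [hzero, zero_div, mul_zero, zero_add]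
    exact mul_le_mul_of_nonneg_right hpow
      (div_nonneg ((even_two_mul _).pow_nonneg x) (Nat.cast_nonneg _))

theorem heinz_mean_eq_sqrt_mul_mul_cosh {a b : ℝ} (ha : 0 < a) (hb : 0 < b) (t : ℝ) :
    (a ^ t * b ^ (1 - t) + a ^ (1 - t) * b ^ t) / 2
      = √(a * b) * cosh ((2 * t - 1) * ((log a - log b) / 2)) := by
  have hsqrt : √(a * b) = exp ((log a + log b) / 2) := by
    rw [exp_half, ← log_mul ha.ne' hb.ne', exp_log (mul_pos ha hb)]
  rw [hsqrt, cosh_eq, rpow_def_of_pos ha, rpow_def_of_pos ha, rpow_def_of_pos hb,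
    rpow_def_of_pos hb, ← exp_add, ← exp_add, mul_div_assoc', mul_add, ← exp_add, ← exp_add]
  congr 3 <;> ring

theorem add_div_two_eq_sqrt_mul_mul_cosh {a b : ℝ} (ha : 0 < a) (hb : 0 < b) :
    (a + b) / 2 = √(a * b) * cosh ((log a - log b) / 2) := by
  have h := heinz_mean_eq_sqrt_mul_mul_cosh ha hb 1
  norm_num at h
  exact h

theorem heinz_le_heron (a b t : ℝ) (ha : 0 < a) (hb : 0 < b)
    (ht0 : 0 ≤ t) (ht1 : t ≤ 1) :
    (a ^ t * b ^ (1 - t) + a ^ (1 - t) * b ^ t) / 2 ≤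
      (1 - (1 - 4 * t * (1 - t))) * Real.sqrt (a * b)
        + (1 - 4 * t * (1 - t)) * ((a + b) / 2) := by
  have hl : |2 * t - 1| ≤ 1 := abs_le.mpr ⟨by linarith, by linarith⟩
  have hα : 1 - 4 * t * (1 - t) = (2 * t - 1) ^ 2 := by ring
  rw [hα, add_div_two_eq_sqrt_mul_mul_cosh ha hb, heinz_mean_eq_sqrt_mul_mul_cosh ha hb]
  calc √(a * b) * cosh ((2 * t - 1) * ((log a - log b) / 2))
      ≤ √(a * b) * (1 - (2 * t - 1) ^ 2 + (2 * t - 1) ^ 2 * cosh ((log a - log b) / 2)) :=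
        mul_le_mul_of_nonneg_left (cosh_mul_le hl _) (sqrt_nonneg _)
    _ = _ := by ring
end

section
/- Let a, b > 0 and τ, ν ∈ (0,1) with ν ≤ min{τ,1-τ} or ν ≥ max{τ,1-τ}. Then ((a∇b)/H_ν(a,b))^{1/(ν(1-ν))} ≤ ((a∇b)/H_τ(a,b))^{1/(τ(1-τ))}. -/
/-!
Write `a = exp (g + s)` and `b = exp (g - s)`. Then `(a∇b) / H_t(a,b) = cosh s / cosh ((2t-1) s)`,
and since `t (1 - t) = (1 - (2t-1)²) / 4`, its `1 / (t (1 - t))`-th power is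
`exp (4 · slope m 1 ((2t-1)²))` with `m x = log (cosh (s √x))`. The hypothesis on `ν, τ` says
`(2τ-1)² ≤ (2ν-1)²`, so the claim follows from the concavity of `m` on `[0, ∞)`: secant slopes
towards `1` decrease. Concavity of `x ↦ log (cosh √x)` amounts to `tanh u / u` decreasing,
which in turn reduces to `2u ≤ sinh 2u`.
-/

open Real Set

theorem Real.self_le_sinh_mul_cosh {u : ℝ} (hu : 0 ≤ u) : u ≤ sinh u * cosh u := by
  have := self_le_sinh_iff.2 (by positivity : 0 ≤ 2 * u)
  rw [sinh_two_mul] at this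
  linarith

theorem Real.antitoneOn_tanh_div_self : AntitoneOn (fun u => tanh u / u) (Ioi 0) := by
  have hderiv : ∀ u ≠ 0, HasDerivAt (fun u => sinh u / (u * cosh u))
      ((cosh u * (u * cosh u) - sinh u * (1 * cosh u + u * sinh u)) / (u * cosh u) ^ 2) u :=
    fun u hu => (hasDerivAt_sinh u).div ((hasDerivAt_id' u).mul (hasDerivAt_cosh u))
      (mul_ne_zero hu (cosh_pos u).ne')
  have hfun : (fun u => tanh u / u) = fun u => sinh u / (u * cosh u) := by
    ext u; rw [tanh_eq_sinh_div_cosh, div_div, mul_comm]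
  rw [hfun]
  refine antitoneOn_of_deriv_nonpos (convex_Ioi 0) ?_ ?_ ?_
  · exact fun u hu => (hderiv u (ne_of_gt hu)).continuousAt.continuousWithinAt
  · rw [interior_Ioi]
    exact fun u hu => (hderiv u (ne_of_gt hu)).differentiableAt.differentiableWithinAt
  · rw [interior_Ioi]
    intro u hu
    rw [(hderiv u (ne_of_gt hu)).deriv]
    refine div_nonpos_of_nonpos_of_nonneg ?_ (sq_nonneg _)
    linear_combination u * cosh_sq_sub_sinh_sq u + self_le_sinh_mul_cosh (le_of_lt hu)

theorem Real.concaveOn_log_cosh_sqrt : ConcaveOn ℝ (Ici 0) fun x => log (cosh √x) := by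
  have hderiv : ∀ x : ℝ, 0 < x → HasDerivAt (fun x => log (cosh √x)) (tanh √x / √x / 2) x := by
    intro x hx
    convert ((hasDerivAt_sqrt hx.ne').cosh).log (cosh_pos _).ne' using 1
    rw [tanh_eq_sinh_div_cosh]
    ring
  refine AntitoneOn.concaveOn_of_deriv (convex_Ici 0)
    ((continuous_cosh.comp continuous_sqrt).continuousOn.log fun x _ => (cosh_pos _).ne') ?_ ?_
  · rw [interior_Ici]
    exact fun x hx => (hderiv x hx).differentiableAt.differentiableWithinAt
  · rw [interior_Ici]
    intro x hx y hy hxy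
    rw [(hderiv x hx).deriv, (hderiv y hy).deriv]
    gcongr ?_ / 2
    exact antitoneOn_tanh_div_self (sqrt_pos.2 hx) (sqrt_pos.2 hy) (sqrt_le_sqrt hxy)

theorem Real.concaveOn_log_cosh_mul_sqrt (s : ℝ) :
    ConcaveOn ℝ (Ici 0) fun x => log (cosh (s * √x)) := by
  have hscale : (fun x => log (cosh (s * √x))) =
      (fun x => log (cosh √x)) ∘ (s ^ 2 • LinearMap.id : ℝ →ₗ[ℝ] ℝ) := by
    ext x
    simp [sqrt_mul (sq_nonneg s), sqrt_sq_eq_abs, ← cosh_abs (s * √x), abs_mul,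
      abs_of_nonneg (sqrt_nonneg x)]
  rw [hscale]
  refine (concaveOn_log_cosh_sqrt.comp_linearMap _).subset (fun x hx => ?_) (convex_Ici 0)
  simpa using mul_nonneg (sq_nonneg s) hx

theorem heinz_sum_exp_add_exp_sub (g s t : ℝ) :
    exp (g + s) ^ t * exp (g - s) ^ (1 - t) + exp (g + s) ^ (1 - t) * exp (g - s) ^ t =
      2 * exp g * cosh ((2 * t - 1) * s) := by
  simp only [← exp_mul, ← exp_add, cosh_eq]
  rw [show (g + s) * t + (g - s) * (1 - t) = g + (2 * t - 1) * s by ring,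
    show (g + s) * (1 - t) + (g - s) * t = g + -((2 * t - 1) * s) by ring, exp_add, exp_add]
  ring

theorem add_div_two_div_heinz_eq_cosh_div_cosh {a b : ℝ} (ha : 0 < a) (hb : 0 < b) (t : ℝ) :
    (a + b) / 2 / ((a ^ t * b ^ (1 - t) + a ^ (1 - t) * b ^ t) / 2) =
      cosh ((log a - log b) / 2) / cosh ((2 * t - 1) * ((log a - log b) / 2)) := by
  obtain ⟨g, s, rfl, rfl⟩ : ∃ g s, a = exp (g + s) ∧ b = exp (g - s) :=
    ⟨(log a + log b) / 2, (log a - log b) / 2, by ring_nf; exact (exp_log ha).symm,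
      by ring_nf; exact (exp_log hb).symm⟩
  have hsum : exp (g + s) + exp (g - s) = 2 * exp g * cosh s := by
    simpa [show (2 : ℝ) - 1 = 1 by norm_num] using heinz_sum_exp_add_exp_sub g s 1
  rw [heinz_sum_exp_add_exp_sub, hsum, log_exp, log_exp,
    show (g + s - (g - s)) / 2 = s by ring]
  have := (cosh_pos ((2 * t - 1) * s)).ne'
  field_simp

theorem heinz_ratio_rpow_eq_exp_slope {a b t : ℝ} (ha : 0 < a) (hb : 0 < b) (ht : t ∈ Ioo 0 1) :
    ((a + b) / 2 / ((a ^ t * b ^ (1 - t) + a ^ (1 - t) * b ^ t) / 2)) ^ (1 / (t * (1 - t))) =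
      exp (4 * slope (fun x => log (cosh ((log a - log b) / 2 * √x))) 1 ((2 * t - 1) ^ 2)) := by
  rw [add_div_two_div_heinz_eq_cosh_div_cosh ha hb]
  generalize (log a - log b) / 2 = s
  have hcosh : cosh (s * √((2 * t - 1) ^ 2)) = cosh ((2 * t - 1) * s) := by
    rw [sqrt_sq_eq_abs, ← cosh_abs, ← cosh_abs ((2 * t - 1) * s), abs_mul, abs_mul, abs_abs,
      mul_comm]
  have ht0 : t * (1 - t) ≠ 0 := by nlinarith [ht.1, ht.2]
  rw [rpow_def_of_pos (by positivity), log_div (cosh_pos _).ne' (cosh_pos _).ne',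
    slope_def_field, hcosh, sqrt_one, mul_one,
    show (2 * t - 1) ^ 2 - 1 = -(4 * (t * (1 - t))) by ring]
  congr 1
  field_simp
  ring

theorem heinz_multiplicative_comparison (a b ν τ : ℝ) (ha : 0 < a) (hb : 0 < b)
    (hν : ν ∈ Set.Ioo (0:ℝ) 1) (hτ : τ ∈ Set.Ioo (0:ℝ) 1)
    (h : ν ≤ min τ (1 - τ) ∨ max τ (1 - τ) ≤ ν) :
    (((a + b) / 2) / ((a ^ ν * b ^ (1 - ν) + a ^ (1 - ν) * b ^ ν) / 2)) ^ (1 / (ν * (1 - ν))) ≤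
    (((a + b) / 2) / ((a ^ τ * b ^ (1 - τ) + a ^ (1 - τ) * b ^ τ) / 2)) ^ (1 / (τ * (1 - τ))) := by
  have hmem : ∀ t ∈ Ioo (0 : ℝ) 1, (2 * t - 1) ^ 2 ∈ {x ∈ Ici 0 | x < 1} :=
    fun t ht => ⟨mem_Ici.2 (sq_nonneg _), by nlinarith [ht.1, ht.2]⟩
  have hdist : (2 * τ - 1) ^ 2 ≤ (2 * ν - 1) ^ 2 := by
    rcases h with h | h
    · rw [le_min_iff] at h
      nlinarith
    · rw [max_le_iff] at h
      nlinarith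
  rw [heinz_ratio_rpow_eq_exp_slope ha hb hν, heinz_ratio_rpow_eq_exp_slope ha hb hτ, exp_le_exp]
  gcongr 4 * ?_
  exact (concaveOn_log_cosh_mul_sqrt _).antitoneOn_slope_lt (mem_Ici.2 zero_le_one)
    (hmem τ hτ) (hmem ν hν) hdist
end

section
/- For all a, b > 0 and 0 < ν < 1, one has 2√(ab) ≤ (a+b) · ((a^ν b^{1-ν} + a^{1-ν} b^ν)/(a+b))^{1/(4ν(1-ν))} ≤ a^ν b^{1-ν} + a^{1-ν} b^ν. -/
/-!
Write `a = s e^t`, `b = s e^{-t}` with `s = √(ab)` and put `μ = 2ν - 1`, so that `4ν(1-ν) = 1 - μ²`.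
Then `a + b = 2s cosh t` and `a^ν b^{1-ν} + a^{1-ν} b^ν = 2s cosh (μt)`, and both inequalities
reduce to statements about `r = cosh (μt) / cosh t ∈ (0, 1]`. The upper bound is `r^p ≤ r` for
`p ≥ 1`; the lower bound is equivalent to `cosh t ^ μ² ≤ cosh (μt)`, which holds because
`y ↦ log (cosh y) / y²` is antitone on `(0, ∞)`.
-/

open Real Set

namespace Real

theorem self_le_sinh_mul_cosh_s13 {x : ℝ} (hx : 0 ≤ x) : x ≤ sinh x * cosh x := by
  have h : 2 * x ≤ sinh (2 * x) := self_le_sinh_iff.2 (by linarith)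
  rw [sinh_two_mul] at h
  linarith

theorem hasDerivAt_log_cosh (y : ℝ) :
    HasDerivAt (fun z => log (cosh z)) (sinh y / cosh y) y :=
  (hasDerivAt_cosh y).log (cosh_pos y).ne'

theorem mul_sinh_div_cosh_le_two_mul_log_cosh {x : ℝ} (hx : 0 ≤ x) :
    x * (sinh x / cosh x) ≤ 2 * log (cosh x) := by
  let ψ : ℝ → ℝ := fun y => 2 * log (cosh y) - y * (sinh y / cosh y)
  have hψ' (y : ℝ) : HasDerivAt ψ ((sinh y * cosh y - y) / cosh y ^ 2) y := by
    have hc := (cosh_pos y).ne'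
    have htanh := (hasDerivAt_sinh y).div (hasDerivAt_cosh y) hc
    refine (((hasDerivAt_log_cosh y).const_mul 2).sub
      ((hasDerivAt_id y).mul htanh)).congr_deriv ?_
    simp only [id, Pi.div_apply, one_mul]
    field_simp
    linear_combination -y * cosh_sq_sub_sinh_sq y
  have hmono : MonotoneOn ψ (Ici 0) := by
    refine monotoneOn_of_hasDerivWithinAt_nonneg (convex_Ici 0)
      (fun y _ => (hψ' y).continuousAt.continuousWithinAt)
      (fun y _ => (hψ' y).hasDerivWithinAt) fun y hy => ?_
    rw [interior_Ici] at hy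
    exact div_nonneg (sub_nonneg.2 (self_le_sinh_mul_cosh_s13 hy.le)) (by positivity)
  have h0 : ψ 0 ≤ ψ x := hmono self_mem_Ici hx hx
  simp only [ψ, cosh_zero, log_one, zero_mul, sub_zero, mul_zero] at h0
  linarith

theorem antitoneOn_log_cosh_div_sq : AntitoneOn (fun y => log (cosh y) / y ^ 2) (Ioi 0) := by
  have hφ' : ∀ y ∈ Ioi (0 : ℝ), HasDerivAt (fun y => log (cosh y) / y ^ 2)
      ((y * (sinh y / cosh y) - 2 * log (cosh y)) / y ^ 3) y := by
    intro y hy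
    have hy : y ≠ 0 := ne_of_gt hy
    refine ((hasDerivAt_log_cosh y).div (hasDerivAt_pow 2 y) (pow_ne_zero 2 hy)).congr_deriv ?_
    field_simp
    ring
  refine antitoneOn_of_hasDerivWithinAt_nonpos (convex_Ioi 0)
    (fun y hy => (hφ' y hy).continuousAt.continuousWithinAt)
    (fun y hy => (hφ' y (interior_subset hy)).hasDerivWithinAt) fun y hy => ?_
  rw [interior_Ioi] at hy
  exact div_nonpos_of_nonpos_of_nonneg
    (sub_nonpos.2 (mul_sinh_div_cosh_le_two_mul_log_cosh hy.le)) (pow_pos hy 3).le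

theorem cosh_rpow_sq_le_cosh_mul (t : ℝ) {μ : ℝ} (hμ : |μ| ≤ 1) :
    cosh t ^ (μ ^ 2) ≤ cosh (μ * t) := by
  rcases eq_or_ne (μ * t) 0 with hμt | hμt
  · rcases mul_eq_zero.1 hμt with h | h <;> simp [h]
  have hs : 0 < |μ * t| := abs_pos.2 hμt
  have hst : |μ * t| ≤ |t| := by
    rw [abs_mul]; exact mul_le_of_le_one_left (abs_nonneg t) hμ
  have h := antitoneOn_log_cosh_div_sq hs (hs.trans_le hst) hst
  simp only [cosh_abs, sq_abs] at h
  have ht2 : 0 < t ^ 2 := sq_pos_of_ne_zero (right_ne_zero_of_mul hμt)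
  rw [div_le_div_iff₀ ht2 (sq_pos_of_ne_zero hμt), mul_pow] at h
  have hlog : μ ^ 2 * log (cosh t) ≤ log (cosh (μ * t)) :=
    le_of_mul_le_mul_right (by linarith) ht2
  rw [rpow_def_of_pos (cosh_pos t), ← exp_log (cosh_pos (μ * t))]
  exact exp_le_exp.2 (by linarith)

end Real

theorem one_le_mul_div_rpow_one_div {c d θ : ℝ} (hc : 0 < c) (hθ : 0 < θ)
    (h : c ^ (1 - θ) ≤ d) : 1 ≤ c * (d / c) ^ (1 / θ) := by
  have hcθ : c ^ (-θ) ≤ d / c := by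
    rw [le_div_iff₀ hc, ← rpow_add_one hc.ne']
    simpa [neg_add_eq_sub] using h
  have hinv : c⁻¹ ≤ (d / c) ^ (1 / θ) := by
    calc c⁻¹ = (c ^ (-θ)) ^ (1 / θ) := by
          rw [← rpow_mul hc.le, neg_mul, mul_one_div_cancel hθ.ne', rpow_neg_one]
      _ ≤ (d / c) ^ (1 / θ) := rpow_le_rpow (by positivity) hcθ (by positivity)
  rwa [inv_le_iff_one_le_mul₀ hc, mul_comm] at hinv

theorem mul_div_rpow_le {c d p : ℝ} (hd : 0 < d) (hdc : d ≤ c) (hp : 1 ≤ p) :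
    c * (d / c) ^ p ≤ d := by
  have hc : 0 < c := hd.trans_le hdc
  calc c * (d / c) ^ p ≤ c * (d / c) :=
        mul_le_mul_of_nonneg_left
          (rpow_le_self_of_le_one (by positivity) ((div_le_one hc).2 hdc) hp) hc.le
    _ = d := mul_div_cancel₀ d hc.ne'

theorem one_le_cosh_mul_rpow_and_le (t : ℝ) {μ : ℝ} (hμ : |μ| < 1) :
    1 ≤ cosh t * (cosh (μ * t) / cosh t) ^ (1 / (1 - μ ^ 2)) ∧
      cosh t * (cosh (μ * t) / cosh t) ^ (1 / (1 - μ ^ 2)) ≤ cosh (μ * t) := by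
  have hμ2 : μ ^ 2 < 1 := (sq_lt_one_iff_abs_lt_one μ).2 hμ
  refine ⟨one_le_mul_div_rpow_one_div (cosh_pos t) (by linarith) ?_,
    mul_div_rpow_le (cosh_pos _) ?_ ?_⟩
  · rw [sub_sub_cancel]; exact cosh_rpow_sq_le_cosh_mul t hμ.le
  · rw [cosh_le_cosh, abs_mul]; exact mul_le_of_le_one_left (abs_nonneg t) hμ.le
  · exact one_le_one_div (by linarith) (sub_le_self 1 (sq_nonneg μ))

theorem rpow_mul_rpow_add_rpow_mul_rpow_eq {a b : ℝ} (ha : 0 < a) (hb : 0 < b) (ν : ℝ) :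
    a ^ ν * b ^ (1 - ν) + a ^ (1 - ν) * b ^ ν =
      2 * √(a * b) * cosh ((2 * ν - 1) * ((log a - log b) / 2)) := by
  have hsqrt : √(a * b) = exp ((log a + log b) / 2) := by
    rw [sqrt_eq_rpow, rpow_def_of_pos (mul_pos ha hb), log_mul ha.ne' hb.ne', mul_one_div]
  rw [hsqrt, cosh_eq, rpow_def_of_pos ha, rpow_def_of_pos ha, rpow_def_of_pos hb,
    rpow_def_of_pos hb, ← exp_add, ← exp_add]
  rw [show ∀ m x : ℝ, 2 * exp m * ((exp x + exp (-x)) / 2) = exp (m + x) + exp (m + -x) by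
    intro m x; rw [exp_add, exp_add]; ring]
  congr 2 <;> ring

theorem add_eq_two_mul_sqrt_mul_cosh {a b : ℝ} (ha : 0 < a) (hb : 0 < b) :
    a + b = 2 * √(a * b) * cosh ((log a - log b) / 2) := by
  simpa [show (2 : ℝ) - 1 = 1 by norm_num] using rpow_mul_rpow_add_rpow_mul_rpow_eq ha hb 1

theorem geometric_heinz_refinement (a b ν : ℝ) (ha : 0 < a) (hb : 0 < b)
    (hν0 : 0 < ν) (hν1 : ν < 1) :
    2 * Real.sqrt (a * b) ≤
      (a + b) * ((a ^ ν * b ^ (1 - ν) + a ^ (1 - ν) * b ^ ν) / (a + b)) ^ (1 / (4 * ν * (1 - ν)))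
    ∧ (a + b) * ((a ^ ν * b ^ (1 - ν) + a ^ (1 - ν) * b ^ ν) / (a + b)) ^ (1 / (4 * ν * (1 - ν)))
        ≤ a ^ ν * b ^ (1 - ν) + a ^ (1 - ν) * b ^ ν := by
  have hμ : |2 * ν - 1| < 1 := abs_lt.2 ⟨by linarith, by linarith⟩
  have hθ : 4 * ν * (1 - ν) = 1 - (2 * ν - 1) ^ 2 := by ring
  have hs : 0 < 2 * √(a * b) := by positivity
  obtain ⟨hlow, hup⟩ := one_le_cosh_mul_rpow_and_le ((log a - log b) / 2) hμ
  rw [rpow_mul_rpow_add_rpow_mul_rpow_eq ha hb, add_eq_two_mul_sqrt_mul_cosh ha hb,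
    mul_div_mul_left _ _ hs.ne', hθ, mul_assoc]
  exact ⟨le_mul_of_one_le_right hs.le hlow, mul_le_mul_of_nonneg_left hup hs.le⟩
end

section
/- Let A, B be n×n positive definite complex matrices with all eigenvalues of A and B lying in [m, M] for some 0 < m ≤ M, X an n×n complex matrix, and τ, ν ∈ (0,1) with ν ≤ min{τ,1-τ} or ν ≥ max{τ,1-τ}. Then ‖AX + XB‖₂ ≤ ((M+m)/(2√(mM)))^{ν(1-ν)/(τ(1-τ))} · ‖A^ν X B^{1-ν} + A^{1-ν} X B^ν‖₂. -/
open Matrix ComplexOrder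

/-- Real power of a matrix, defined via the spectral decomposition when the
matrix is Hermitian (and junk value `0` otherwise). -/
noncomputable def mpow {n : ℕ} (A : Matrix (Fin n) (Fin n) ℂ) (t : ℝ) :
    Matrix (Fin n) (Fin n) ℂ :=
  if hA : A.IsHermitian then
    (hA.eigenvectorUnitary : Matrix (Fin n) (Fin n) ℂ) *
      Matrix.diagonal (fun i => ((hA.eigenvalues i ^ t : ℝ) : ℂ)) *
      (star hA.eigenvectorUnitary : Matrix (Fin n) (Fin n) ℂ)
  else 0

/-- The Hilbert–Schmidt (Frobenius) norm, `‖Y‖₂ = √(tr (Y Yᴴ))`. -/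
noncomputable def hsNorm {n : ℕ} (Y : Matrix (Fin n) (Fin n) ℂ) : ℝ :=
  Real.sqrt (Matrix.trace (Y * Yᴴ)).re

/-!
Diagonalize `A = U diag(a) U*` and `B = V diag(b) V*`. In the coordinates `Y = U* X V` both
`AX + XB` and the Heinz sum `A^ν X B^(1-ν) + A^(1-ν) X B^ν` act entrywise, multiplying `Y i j` by
`a i + b j` and by `a i ^ ν * b j ^ (1-ν) + a i ^ (1-ν) * b j ^ ν` respectively; since unitaries
preserve `‖·‖₂`, it suffices to prove the scalar inequality for `a, b ∈ [m, M]`.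
Writing `a, b = √(ab) e^(±u)`, the two scalar quantities are `2√(ab) cosh u` and
`2√(ab) cosh ((2ν-1) u)`. Kantorovich's inequality says `cosh u ≤ K = (M+m)/(2√(mM))`, and
`cosh (s u) ≥ (cosh u)^(s²)` for `|s| ≤ 1`, so their ratio is at most
`(cosh u)^(1-s²) ≤ K^(4ν(1-ν))`, which is at most `K^(ν(1-ν)/(τ(1-τ)))` because `τ(1-τ) ≤ 1/4`.
-/

section Scalar

open Real Set

lemma monotoneOn_Ici_of_hasDerivAt_nonneg {f f' : ℝ → ℝ} {a : ℝ}
    (hf : ∀ x, HasDerivAt f (f' x) x) (hf' : ∀ x, a < x → 0 ≤ f' x) : MonotoneOn f (Ici a) :=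
  monotoneOn_of_hasDerivWithinAt_nonneg (convex_Ici a)
    (fun x _ => (hf x).continuousAt.continuousWithinAt) (fun x _ => (hf x).hasDerivWithinAt)
    fun x hx => hf' x (by simpa using hx)

lemma mul_sinh_mul_cosh_le {k u : ℝ} (hk₀ : 0 ≤ k) (hk₁ : k ≤ 1) (hu : 0 ≤ u) :
    k * sinh u * cosh (k * u) ≤ sinh (k * u) * cosh u := by
  have hmono : MonotoneOn (fun x => sinh (k * x) * cosh x - k * sinh x * cosh (k * x)) (Ici 0) := by
    refine monotoneOn_Ici_of_hasDerivAt_nonneg (f' := fun x => (1 - k ^ 2) * sinh (k * x) * sinh x)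
      (fun x => ?_) fun x hx => ?_
    · have hkx : HasDerivAt (fun y => k * y) k x := hasDerivAt_const_mul k
      exact ((((hasDerivAt_sinh _).comp x hkx).mul (hasDerivAt_cosh x)).sub
        (((hasDerivAt_sinh x).const_mul k).mul ((hasDerivAt_cosh _).comp x hkx))).congr_deriv
        (by simp only [Function.comp_apply]; ring)
    · have : 0 ≤ 1 - k ^ 2 := by nlinarith
      have : 0 ≤ sinh (k * x) := sinh_nonneg_iff.mpr (by positivity)
      have : 0 ≤ sinh x := sinh_nonneg_iff.mpr hx.le
      positivity
  have := hmono self_mem_Ici hu hu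
  simp only [mul_zero, sinh_zero, cosh_zero] at this
  linarith

lemma sq_mul_log_cosh_le {k u : ℝ} (hk₀ : 0 ≤ k) (hk₁ : k ≤ 1) (hu : 0 ≤ u) :
    k ^ 2 * log (cosh u) ≤ log (cosh (k * u)) := by
  have hmono : MonotoneOn (fun x => log (cosh (k * x)) - k ^ 2 * log (cosh x)) (Ici 0) := by
    refine monotoneOn_Ici_of_hasDerivAt_nonneg
      (f' := fun x => sinh (k * x) * k / cosh (k * x) - k ^ 2 * (sinh x / cosh x))
      (fun x => ?_) fun x hx => ?_
    · exact (((hasDerivAt_cosh _).comp x (hasDerivAt_const_mul k)).log (cosh_pos _).ne').sub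
        (((hasDerivAt_cosh x).log (cosh_pos _).ne').const_mul _)
    · have := mul_sinh_mul_cosh_le hk₀ hk₁ hx.le
      rw [sub_nonneg, ← mul_div_assoc, div_le_div_iff₀ (cosh_pos x) (cosh_pos _)]
      nlinarith [mul_le_mul_of_nonneg_left this hk₀]
  have := hmono self_mem_Ici hu hu
  simp only [mul_zero, cosh_zero, log_one, sub_zero] at this
  linarith

lemma cosh_rpow_sq_le_cosh_mul {k : ℝ} (hk : |k| ≤ 1) (u : ℝ) :
    cosh u ^ (k ^ 2) ≤ cosh (k * u) := by
  rw [← cosh_abs (k * u), abs_mul, ← cosh_abs u, ← sq_abs k, rpow_def_of_pos (cosh_pos _),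
    mul_comm, ← le_log_iff_exp_le (cosh_pos _)]
  exact sq_mul_log_cosh_le (abs_nonneg k) hk (abs_nonneg u)

/-- Twice the Heinz mean of `a` and `b`. -/
noncomputable def heinz (ν a b : ℝ) : ℝ := a ^ ν * b ^ (1 - ν) + a ^ (1 - ν) * b ^ ν

lemma heinz_one (a b : ℝ) : heinz 1 a b = a + b := by
  simp [heinz]

lemma heinz_pos {a b : ℝ} (ha : 0 < a) (hb : 0 < b) (ν : ℝ) : 0 < heinz ν a b := by
  unfold heinz; positivity

lemma heinz_eq_cosh {a b : ℝ} (ha : 0 < a) (hb : 0 < b) (ν : ℝ) :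
    heinz ν a b = 2 * √(a * b) * cosh ((2 * ν - 1) * (log (a / b) / 2)) := by
  have hsqrt : √(a * b) = exp ((log a + log b) / 2) := by
    rw [sqrt_eq_rpow, rpow_def_of_pos (mul_pos ha hb), log_mul ha.ne' hb.ne', mul_one_div]
  have hcosh (p x : ℝ) : 2 * exp p * cosh x = exp (p + x) + exp (p + -x) := by
    rw [cosh_eq, exp_add, exp_add]; ring
  rw [heinz, hsqrt, hcosh, rpow_def_of_pos ha, rpow_def_of_pos hb, rpow_def_of_pos ha,
    rpow_def_of_pos hb, ← exp_add, ← exp_add, log_div ha.ne' hb.ne']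
  congr 2 <;> ring

lemma add_mul_sqrt_le_mul_sqrt {m M a b : ℝ} (hm : 0 < m) (ha : a ∈ Icc m M) (hb : b ∈ Icc m M) :
    (a + b) * √(m * M) ≤ (M + m) * √(a * b) := by
  obtain ⟨ham, haM⟩ := ha
  obtain ⟨hbm, hbM⟩ := hb
  refine le_of_pow_le_pow_left₀ two_ne_zero (mul_nonneg (by linarith) (sqrt_nonneg _)) ?_
  rw [mul_pow, mul_pow, sq_sqrt (by nlinarith), sq_sqrt (by nlinarith)]
  -- `(M + m)² ab - (a + b)² mM = (Ma - mb)(Mb - ma)`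
  nlinarith [mul_nonneg (sub_nonneg.2 (mul_le_mul haM hbm hm.le (by linarith)))
    (sub_nonneg.2 (mul_le_mul hbM ham hm.le (by linarith)))]

lemma add_le_rpow_mul_heinz {m M a b ν r : ℝ} (hm : 0 < m) (ha : a ∈ Icc m M)
    (hb : b ∈ Icc m M) (hν : ν ∈ Icc 0 1) (hr : 4 * ν * (1 - ν) ≤ r) :
    a + b ≤ ((M + m) / (2 * √(m * M))) ^ r * heinz ν a b := by
  have ha₀ : 0 < a := hm.trans_le ha.1
  have hb₀ : 0 < b := hm.trans_le hb.1
  have hM : 0 < M := ha₀.trans_le ha.2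
  set K := (M + m) / (2 * √(m * M))
  set u := log (a / b) / 2
  set s := 2 * ν - 1
  have hab : a + b = 2 * √(a * b) * cosh u := by
    rw [← heinz_one, heinz_eq_cosh ha₀ hb₀, show (2 * 1 - 1 : ℝ) = 1 by norm_num, one_mul]
  have hK : cosh u ≤ K := by
    have := add_mul_sqrt_le_mul_sqrt hm ha hb
    rw [hab] at this
    rw [le_div_iff₀ (by positivity)]
    exact le_of_mul_le_mul_left (by linarith) (sqrt_pos.2 (mul_pos ha₀ hb₀))
  have hs : |s| ≤ 1 := abs_le.2 ⟨by linarith [hν.1], by linarith [hν.2]⟩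
  have hsr : 1 - s ^ 2 ≤ r := by linarith
  have hs₀ : 0 ≤ 1 - s ^ 2 := sub_nonneg.2 ((sq_le_one_iff_abs_le_one s).2 hs)
  calc a + b = 2 * √(a * b) * (cosh u ^ (s ^ 2) * cosh u ^ (1 - s ^ 2)) := by
        rw [← rpow_add (cosh_pos u), add_sub_cancel, rpow_one, hab]
    _ ≤ 2 * √(a * b) * (cosh (s * u) * K ^ r) := by
        gcongr
        · exact cosh_rpow_sq_le_cosh_mul hs u
        · calc cosh u ^ (1 - s ^ 2) ≤ K ^ (1 - s ^ 2) := rpow_le_rpow (cosh_pos u).le hK hs₀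
            _ ≤ K ^ r := rpow_le_rpow_of_exponent_le ((one_le_cosh u).trans hK) hsr
    _ = K ^ r * heinz ν a b := by rw [heinz_eq_cosh ha₀ hb₀]; ring

end Scalar

section Matrix

variable {n : ℕ}

lemma hsNorm_eq_sqrt_sum (Y : Matrix (Fin n) (Fin n) ℂ) :
    hsNorm Y = √(∑ i, ∑ j, ‖Y i j‖ ^ 2) := by
  simp [hsNorm, trace, mul_apply, Complex.mul_conj, Complex.normSq_eq_norm_sq, Complex.re_sum,
    - Complex.ofReal_pow]

lemma hsNorm_mul_mul_star {U V : Matrix (Fin n) (Fin n) ℂ} (hU : U ∈ unitaryGroup (Fin n) ℂ)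
    (hV : V ∈ unitaryGroup (Fin n) ℂ) (Z : Matrix (Fin n) (Fin n) ℂ) :
    hsNorm (U * Z * star V) = hsNorm Z := by
  have hV' (W : Matrix (Fin n) (Fin n) ℂ) : star V * (V * W) = W := by
    rw [← Matrix.mul_assoc, Unitary.star_mul_self_of_mem hV, Matrix.one_mul]
  have : (U * Z * star V) * (U * Z * star V)ᴴ = U * (Z * Zᴴ) * star U := by
    simp only [← star_eq_conjTranspose, star_mul, star_star, Matrix.mul_assoc, hV']
  rw [hsNorm, this, trace_mul_cycle, Unitary.star_mul_self_of_mem hU, Matrix.one_mul, hsNorm]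

lemma hsNorm_le_mul_of_norm_le {Z W : Matrix (Fin n) (Fin n) ℂ} {c : ℝ} (hc : 0 ≤ c)
    (h : ∀ i j, ‖Z i j‖ ≤ c * ‖W i j‖) : hsNorm Z ≤ c * hsNorm W := by
  rw [hsNorm_eq_sqrt_sum, hsNorm_eq_sqrt_sum, ← Real.sqrt_sq hc, ← Real.sqrt_mul (sq_nonneg c),
    Finset.mul_sum]
  gcongr with i _
  rw [Finset.mul_sum]
  gcongr with j _
  rw [← mul_pow]
  exact pow_le_pow_left₀ (norm_nonneg _) (h i j) 2

lemma mpow_eq {A : Matrix (Fin n) (Fin n) ℂ} (hA : A.IsHermitian) (t : ℝ) :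
    mpow A t = (hA.eigenvectorUnitary : Matrix (Fin n) (Fin n) ℂ) *
      diagonal (fun i => ((hA.eigenvalues i ^ t : ℝ) : ℂ)) *
      star (hA.eigenvectorUnitary : Matrix (Fin n) (Fin n) ℂ) :=
  dif_pos hA

lemma mpow_one {A : Matrix (Fin n) (Fin n) ℂ} (hA : A.IsHermitian) : mpow A 1 = A := by
  conv_rhs => rw [hA.spectral_theorem]
  simp [mpow_eq hA, Function.comp_def]

lemma mpow_zero {A : Matrix (Fin n) (Fin n) ℂ} (hA : A.IsHermitian) : mpow A 0 = 1 := by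
  simp [mpow_eq hA]

noncomputable def mheinz (A B X : Matrix (Fin n) (Fin n) ℂ) (ν : ℝ) : Matrix (Fin n) (Fin n) ℂ :=
  mpow A ν * X * mpow B (1 - ν) + mpow A (1 - ν) * X * mpow B ν

lemma mheinz_one {A B : Matrix (Fin n) (Fin n) ℂ} (hA : A.IsHermitian) (hB : B.IsHermitian)
    (X : Matrix (Fin n) (Fin n) ℂ) : mheinz A B X 1 = A * X + X * B := by
  simp [mheinz, mpow_one hA, mpow_one hB, mpow_zero hA, mpow_zero hB]

lemma mheinz_eq {A B : Matrix (Fin n) (Fin n) ℂ} (hA : A.IsHermitian) (hB : B.IsHermitian)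
    (X : Matrix (Fin n) (Fin n) ℂ) (ν : ℝ) :
    mheinz A B X ν = (hA.eigenvectorUnitary : Matrix (Fin n) (Fin n) ℂ) *
      of (fun i j => (heinz ν (hA.eigenvalues i) (hB.eigenvalues j) : ℂ) *
        (star (hA.eigenvectorUnitary : Matrix (Fin n) (Fin n) ℂ) * X * hB.eigenvectorUnitary) i j) *
      star (hB.eigenvectorUnitary : Matrix (Fin n) (Fin n) ℂ) := by
  set U := (hA.eigenvectorUnitary : Matrix (Fin n) (Fin n) ℂ)
  set V := (hB.eigenvectorUnitary : Matrix (Fin n) (Fin n) ℂ)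
  have hconj (s t : ℝ) : mpow A s * X * mpow B t = U *
      (diagonal (fun i => ((hA.eigenvalues i ^ s : ℝ) : ℂ)) * (star U * X * V) *
        diagonal (fun j => ((hB.eigenvalues j ^ t : ℝ) : ℂ))) * star V := by
    simp only [mpow_eq hA, mpow_eq hB, Matrix.mul_assoc, U, V]
  rw [mheinz, hconj, hconj, ← Matrix.add_mul, ← Matrix.mul_add]
  congr 2
  ext i j
  simp only [Matrix.add_apply, diagonal_mul, mul_diagonal, of_apply, heinz]
  push_cast
  ring

lemma hsNorm_mheinz_le {A B : Matrix (Fin n) (Fin n) ℂ} (hA : A.IsHermitian) (hB : B.IsHermitian)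
    (X : Matrix (Fin n) (Fin n) ℂ) {μ ν c : ℝ} (hc : 0 ≤ c)
    (h : ∀ i j, |heinz μ (hA.eigenvalues i) (hB.eigenvalues j)| ≤
      c * |heinz ν (hA.eigenvalues i) (hB.eigenvalues j)|) :
    hsNorm (mheinz A B X μ) ≤ c * hsNorm (mheinz A B X ν) := by
  rw [mheinz_eq hA hB, mheinz_eq hA hB,
    hsNorm_mul_mul_star hA.eigenvectorUnitary.2 hB.eigenvectorUnitary.2,
    hsNorm_mul_mul_star hA.eigenvectorUnitary.2 hB.eigenvectorUnitary.2]
  refine hsNorm_le_mul_of_norm_le hc fun i j => ?_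
  simp only [of_apply, norm_mul, Complex.norm_real, Real.norm_eq_abs, ← mul_assoc]
  exact mul_le_mul_of_nonneg_right (h i j) (norm_nonneg _)

end Matrix

theorem matrix_kantorovich_reverse_heinz_general {n : ℕ} (A B X : Matrix (Fin n) (Fin n) ℂ)
    (hA : A.PosDef) (hB : B.PosDef) (m M : ℝ) (hm : 0 < m) (hmM : m ≤ M)
    (hAm : ∀ i, m ≤ hA.1.eigenvalues i) (hAM : ∀ i, hA.1.eigenvalues i ≤ M)
    (hBm : ∀ i, m ≤ hB.1.eigenvalues i) (hBM : ∀ i, hB.1.eigenvalues i ≤ M)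
    (τ ν : ℝ) (hτ : τ ∈ Set.Ioo (0:ℝ) 1) (hν : ν ∈ Set.Ioo (0:ℝ) 1) :
    hsNorm (A * X + X * B) ≤
      ((M + m) / (2 * Real.sqrt (m * M))) ^ (ν * (1 - ν) / (τ * (1 - τ))) *
        hsNorm (mpow A ν * X * mpow B (1 - ν) + mpow A (1 - ν) * X * mpow B ν) := by
  have hM : 0 < M := hm.trans_le hmM
  have hr : 4 * ν * (1 - ν) ≤ ν * (1 - ν) / (τ * (1 - τ)) := by
    rw [le_div_iff₀ (mul_pos hτ.1 (sub_pos.2 hτ.2))]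
    nlinarith [mul_nonneg (mul_pos hν.1 (sub_pos.2 hν.2)).le (sq_nonneg (2 * τ - 1))]
  rw [← mheinz_one hA.1 hB.1]
  refine hsNorm_mheinz_le hA.1 hB.1 X (by positivity) fun i j => ?_
  have ha : 0 < hA.1.eigenvalues i := hm.trans_le (hAm i)
  have hb : 0 < hB.1.eigenvalues j := hm.trans_le (hBm j)
  rw [heinz_one, abs_of_pos (add_pos ha hb), abs_of_pos (heinz_pos ha hb ν)]
  exact add_le_rpow_mul_heinz hm ⟨hAm i, hAM i⟩ ⟨hBm j, hBM j⟩ (Set.Ioo_subset_Icc_self hν) hr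

theorem matrix_kantorovich_reverse_heinz {n : ℕ} (A B X : Matrix (Fin n) (Fin n) ℂ)
    (hA : A.PosDef) (hB : B.PosDef) (m M : ℝ) (hm : 0 < m) (hmM : m ≤ M)
    (hAm : ∀ i, m ≤ hA.1.eigenvalues i) (hAM : ∀ i, hA.1.eigenvalues i ≤ M)
    (hBm : ∀ i, m ≤ hB.1.eigenvalues i) (hBM : ∀ i, hB.1.eigenvalues i ≤ M)
    (τ ν : ℝ) (hτ : τ ∈ Set.Ioo (0:ℝ) 1) (hν : ν ∈ Set.Ioo (0:ℝ) 1)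
    (h : ν ≤ min τ (1 - τ) ∨ max τ (1 - τ) ≤ ν) :
    hsNorm (A * X + X * B) ≤
      ((M + m) / (2 * Real.sqrt (m * M))) ^ (ν * (1 - ν) / (τ * (1 - τ))) *
        hsNorm (mpow A ν * X * mpow B (1 - ν) + mpow A (1 - ν) * X * mpow B ν) :=
  matrix_kantorovich_reverse_heinz_general A B X hA hB m M hm hmM hAm hAM hBm hBM τ ν hτ hν
end
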